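/- Let d ≥ 2, s ∈ ℝ. Let ρ : ℝ^{d-1}∖{0} → (0,∞) satisfy ρ(tξ') = t ρ(ξ') for all t > 0, and let p : (0,∞) × (ℝ^{d-1}∖{0}) → ℂ be measurable with p(t^{-1}y, tξ') = t^s p(y, ξ') for all t > 0. Assume that for each ξ' ≠ 0 the function y ↦ p(y,ξ') is integrable on (0,∞), define p̃(ξ', ξ_d) = (2π)^{-1/2} ∫₀^∞ sin(y ξ_d) p(y, ξ') dy, and assume that for each ξ' ≠ 0 the function ξ_d ↦ p̃(ξ',ξ_d)/(ξ_d² + ρ(ξ')²) is integrable on (0,∞). Define v(y_d, ξ') = (2π)^{-1/2} ∫₀^∞ sin(y_d ξ_d) p̃(ξ', ξ_d)/(ξ_d² + ρ(ξ')²) dξ_d. Then v(t^{-1} y_d, t ξ') = t^{s-2} v(y_d, ξ') for all t > 0, y_d > 0 and ξ' ≠ 0; i.e. v is homogeneous of degree s − 2. -/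

import Mathlib

open MeasureTheory

/-- Fourier-sine solution of `-∂²v/∂y_d² + ρ(ξ')² v = p`, `v(0,ξ') = 0`, `v → 0` at
infinity, drops the homogeneity degree by 2: if `ρ(tξ') = tρ(ξ')` and
`p(t⁻¹y, tξ') = t^s p(y,ξ')`, and `v` is defined from `p` via the Fourier-sine
transform `p̃(ξ',ξ_d) = (2π)^{-1/2} ∫₀^∞ sin(yξ_d) p(y,ξ') dy` by
`v(y_d,ξ') = (2π)^{-1/2} ∫₀^∞ sin(y_d ξ_d) p̃(ξ',ξ_d)/(ξ_d² + ρ(ξ')²) dξ_d`, then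
`v(t⁻¹y_d, tξ') = t^{s-2} v(y_d, ξ')`. -/
theorem stmt_10 (d : ℕ) (hd : 2 ≤ d) (s : ℝ)
    (ρ : (Fin (d - 1) → ℝ) → ℝ)
    (hρpos : ∀ ξ' : Fin (d - 1) → ℝ, ξ' ≠ 0 → 0 < ρ ξ')
    (hρhom : ∀ t : ℝ, 0 < t → ∀ ξ' : Fin (d - 1) → ℝ, ξ' ≠ 0 → ρ (t • ξ') = t * ρ ξ')
    (p : ℝ → (Fin (d - 1) → ℝ) → ℂ)
    (hpmeas : Measurable (Function.uncurry p))
    (hphom : ∀ t : ℝ, 0 < t → ∀ y : ℝ, 0 < y → ∀ ξ' : Fin (d - 1) → ℝ, ξ' ≠ 0 →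
      p (t⁻¹ * y) (t • ξ') = ((t ^ s : ℝ) : ℂ) * p y ξ')
    (hpint : ∀ ξ' : Fin (d - 1) → ℝ, ξ' ≠ 0 →
      IntegrableOn (fun y => p y ξ') (Set.Ioi (0 : ℝ)))
    (ptilde : (Fin (d - 1) → ℝ) → ℝ → ℂ)
    (hptilde : ∀ ξ' ξd, ptilde ξ' ξd
      = (((2 * Real.pi) ^ (-(1 : ℝ) / 2) : ℝ) : ℂ) *
          ∫ y in Set.Ioi (0 : ℝ), ((Real.sin (y * ξd) : ℝ) : ℂ) * p y ξ')
    (hptint : ∀ ξ' : Fin (d - 1) → ℝ, ξ' ≠ 0 →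
      IntegrableOn (fun ξd => ptilde ξ' ξd / (((ξd ^ 2 + ρ ξ' ^ 2 : ℝ)) : ℂ))
        (Set.Ioi (0 : ℝ)))
    (v : ℝ → (Fin (d - 1) → ℝ) → ℂ)
    (hv : ∀ yd ξ', v yd ξ'
      = (((2 * Real.pi) ^ (-(1 : ℝ) / 2) : ℝ) : ℂ) *
          ∫ ξd in Set.Ioi (0 : ℝ),
            ((Real.sin (yd * ξd) : ℝ) : ℂ) * ptilde ξ' ξd / (((ξd ^ 2 + ρ ξ' ^ 2 : ℝ)) : ℂ)) :
    ∀ t : ℝ, 0 < t → ∀ yd : ℝ, 0 < yd → ∀ ξ' : Fin (d - 1) → ℝ, ξ' ≠ 0 →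
      v (t⁻¹ * yd) (t • ξ') = ((t ^ (s - 2) : ℝ) : ℂ) * v yd ξ' := by
  intro t ht yd hyd ξ' hξ'
  have htne : t ≠ 0 := ht.ne'
  have htC : (t : ℂ) ≠ 0 := by exact_mod_cast htne
  -- homogeneity of ptilde
  have hpt : ∀ ξd : ℝ, ptilde (t • ξ') ξd
      = ((t ^ (s - 1) : ℝ) : ℂ) * ptilde ξ' (t⁻¹ * ξd) := by
    intro ξd
    rw [hptilde, hptilde]
    have h1 : (∫ y in Set.Ioi (0 : ℝ), ((Real.sin (y * ξd) : ℝ) : ℂ) * p y (t • ξ'))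
        = ∫ y in Set.Ioi (0 : ℝ),
            (fun z => ((Real.sin (t⁻¹ * z * ξd) : ℝ) : ℂ) * (((t ^ s : ℝ) : ℂ) * p z ξ'))
              (t * y) := by
      apply setIntegral_congr_fun measurableSet_Ioi
      intro y hy
      have hy0 : (0 : ℝ) < y := hy
      have h2 := hphom t ht (t * y) (mul_pos ht hy0) ξ' hξ'
      rw [inv_mul_cancel_left₀ htne] at h2
      simp only
      rw [h2, inv_mul_cancel_left₀ htne]
    have h1b := integral_comp_mul_left_Ioi
      (fun z => ((Real.sin (t⁻¹ * z * ξd) : ℝ) : ℂ) * (((t ^ s : ℝ) : ℂ) * p z ξ')) 0 ht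
    rw [h1, h1b, mul_zero]
    have h3 : (∫ z in Set.Ioi (0 : ℝ),
          ((Real.sin (t⁻¹ * z * ξd) : ℝ) : ℂ) * (((t ^ s : ℝ) : ℂ) * p z ξ'))
        = ((t ^ s : ℝ) : ℂ) * ∫ z in Set.Ioi (0 : ℝ),
            ((Real.sin (z * (t⁻¹ * ξd)) : ℝ) : ℂ) * p z ξ' := by
      rw [← MeasureTheory.integral_const_mul]
      apply setIntegral_congr_fun measurableSet_Ioi
      intro z hz
      have h : t⁻¹ * z * ξd = z * (t⁻¹ * ξd) := by ring
      beta_reduce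
      rw [h]; ring
    rw [h3, Complex.real_smul]
    have h6 : t ^ (s - 1) = t ^ s / t := Real.rpow_sub_one htne s
    rw [h6]
    push_cast
    field_simp
    congr 1; congr 1; funext z; ring_nf
  -- main computation
  rw [hv, hv, hρhom t ht ξ' hξ']
  set c : ℂ := (((2 * Real.pi) ^ (-(1 : ℝ) / 2) : ℝ) : ℂ)
  set G : ℝ → ℂ := fun η =>
    ((t ^ (s - 1) : ℝ) : ℂ) * ((t : ℂ) ^ 2)⁻¹ *
      (((Real.sin (yd * η) : ℝ) : ℂ) * ptilde ξ' η / ((η ^ 2 + ρ ξ' ^ 2 : ℝ) : ℂ)) with hG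
  have hρ := hρpos ξ' hξ'
  have h4 : (∫ ξd in Set.Ioi (0 : ℝ),
        ((Real.sin (t⁻¹ * yd * ξd) : ℝ) : ℂ) * ptilde (t • ξ') ξd
          / ((ξd ^ 2 + (t * ρ ξ') ^ 2 : ℝ) : ℂ))
      = ∫ ξd in Set.Ioi (0 : ℝ), G (t⁻¹ * ξd) := by
    apply setIntegral_congr_fun measurableSet_Ioi
    intro ξd hξd
    have hξd0 : (0 : ℝ) < ξd := hξd
    simp only [hG]
    rw [hpt ξd]
    have hsin : t⁻¹ * yd * ξd = yd * (t⁻¹ * ξd) := by ring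
    have hden2 : (0 : ℝ) < (t⁻¹ * ξd) ^ 2 + ρ ξ' ^ 2 := by positivity
    have hd2 : (((t⁻¹ * ξd) ^ 2 + ρ ξ' ^ 2 : ℝ) : ℂ) ≠ 0 := by
      exact_mod_cast hden2.ne'
    have hdeq : ((ξd ^ 2 + (t * ρ ξ') ^ 2 : ℝ) : ℂ)
        = (t : ℂ) ^ 2 * (((t⁻¹ * ξd) ^ 2 + ρ ξ' ^ 2 : ℝ) : ℂ) := by
      push_cast
      field_simp
    rw [hsin, hdeq]
    simp only [div_eq_mul_inv, mul_inv]
    ring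
  rw [h4, integral_comp_mul_left_Ioi G 0 (inv_pos.mpr ht), mul_zero, inv_inv]
  have hGint : (∫ x in Set.Ioi (0 : ℝ), G x)
      = (((t ^ (s - 1) : ℝ) : ℂ) * ((t : ℂ) ^ 2)⁻¹) *
          ∫ ξd in Set.Ioi (0 : ℝ),
            ((Real.sin (yd * ξd) : ℝ) : ℂ) * ptilde ξ' ξd / ((ξd ^ 2 + ρ ξ' ^ 2 : ℝ) : ℂ) := by
    rw [hG, MeasureTheory.integral_const_mul]
  rw [hGint, Complex.real_smul]
  have hts : (t : ℂ) * (((t ^ (s - 1) : ℝ) : ℂ) * ((t : ℂ) ^ 2)⁻¹)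
      = ((t ^ (s - 2) : ℝ) : ℂ) := by
    have h5 : t ^ (s - 2) = t ^ (s - 1) / t := by
      rw [show s - 2 = (s - 1) - 1 by ring, Real.rpow_sub_one htne]
    rw [h5]
    push_cast
    field_simp
  rw [← hts]
  ring
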